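/- Suppose x : ℝ → ℝ is continuously differentiable and f : ℝ → ℝ is continuous, and for every continuously differentiable function φ : ℝ → ℝ with φ(a) = φ(b) = 0 we have -∫ t in a..b, (deriv φ t) * x(t) dt = ∫ t in a..b, φ(t) * f(t) dt. Then deriv x t = f(t) for all t in the open interval (a,b). -/

import Mathlib

/-!
Integrating by parts against a test function vanishing at both endpoints turns the weak form into
`∫ φ (ẋ - f) = 0`. Since `ẋ - f` is continuous, the fundamental lemma of the calculus of
variations (a locally integrable function orthogonal to all smooth test functions supported in an
open set vanishes almost everywhere there) forces `ẋ - f = 0` on `(a, b)`.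
-/

open MeasureTheory Set Function
open scoped ContDiff

theorem integral_deriv_mul_eq_neg_integral_mul_deriv {a b : ℝ} {φ x : ℝ → ℝ}
    (hφ : ContDiff ℝ 1 φ) (hx : ContDiff ℝ 1 x) (hφa : φ a = 0) (hφb : φ b = 0) :
    ∫ t in a..b, deriv φ t * x t = -∫ t in a..b, φ t * deriv x t := by
  rw [intervalIntegral.integral_mul_deriv_eq_deriv_mul
    (fun t _ ↦ (hφ.differentiable one_ne_zero t).hasDerivAt)
    (fun t _ ↦ (hx.differentiable one_ne_zero t).hasDerivAt)
    ((hφ.continuous_deriv le_rfl).intervalIntegrable _ _)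
    ((hx.continuous_deriv le_rfl).intervalIntegrable _ _), hφa, hφb]
  ring

theorem eqOn_zero_of_integral_mul_eq_zero {a b : ℝ} {g : ℝ → ℝ} (hg : ContinuousOn g (Ioo a b))
    (h : ∀ φ : ℝ → ℝ, ContDiff ℝ ∞ φ → HasCompactSupport φ → tsupport φ ⊆ Ioo a b →
      ∫ t in a..b, φ t * g t = 0) :
    EqOn g 0 (Ioo a b) := by
  have hae : ∀ᵐ t, t ∈ Ioo a b → g t = 0 :=
    isOpen_Ioo.ae_eq_zero_of_integral_contDiff_smul_eq_zero
      (hg.locallyIntegrableOn measurableSet_Ioo) fun φ hφ hφc hφU ↦ by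
        simp only [smul_eq_mul]
        rw [← h φ hφ hφc hφU]
        exact (intervalIntegral.integral_eq_integral_of_support_subset <|
          (support_mul_subset_left _ _).trans
            ((subset_tsupport φ).trans (hφU.trans Ioo_subset_Ioc_self))).symm
  exact Measure.eqOn_open_of_ae_eq ((ae_restrict_iff' measurableSet_Ioo).2 hae) isOpen_Ioo hg
    continuousOn_const

theorem weak_implies_strong
    (a b : ℝ) (x f : ℝ → ℝ)
    (hx : ContDiff ℝ 1 x) (hf : Continuous f)
    (hweak : ∀ φ : ℝ → ℝ, ContDiff ℝ 1 φ → φ a = 0 → φ b = 0 →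
      -∫ t in a..b, deriv φ t * x t = ∫ t in a..b, φ t * f t) :
    ∀ t ∈ Set.Ioo a b, deriv x t = f t := by
  have hx' : Continuous (deriv x) := hx.continuous_deriv le_rfl
  have horth : ∀ φ : ℝ → ℝ, ContDiff ℝ 1 φ → φ a = 0 → φ b = 0 →
      ∫ t in a..b, φ t * (deriv x t - f t) = 0 := by
    intro φ hφ hφa hφb
    simp only [mul_sub]
    rw [intervalIntegral.integral_sub (f := fun t ↦ φ t * deriv x t) (g := fun t ↦ φ t * f t)
      ((hφ.continuous.mul hx').intervalIntegrable _ _)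
      ((hφ.continuous.mul hf).intervalIntegrable _ _), ← hweak φ hφ hφa hφb,
      integral_deriv_mul_eq_neg_integral_mul_deriv hφ hx hφa hφb, neg_neg, sub_self]
  intro t ht
  refine sub_eq_zero.1 (eqOn_zero_of_integral_mul_eq_zero (hx'.sub hf).continuousOn
    (fun φ hφ _ hφU ↦ horth φ (hφ.of_le (by simp)) ?_ ?_) ht)
  · exact image_eq_zero_of_notMem_tsupport fun ha ↦ (hφU ha).1.false
  · exact image_eq_zero_of_notMem_tsupport fun hb ↦ (hφU hb).2.false
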